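/- arXiv:math/0610938 — 2 statements merged into one kernel-verified Lean document; each statement's English description precedes it below -/
import Mathlib

section
/- Let p ≤ q ≤ r be integers with p ≥ 1. Then the determinant of the Gram matrix G(p,q,r) equals 1 or −1 (equivalently, pq + pr + qr − pqr = ±1, i.e., the lattice E_{p,q,r} is unimodular) if and only if (p,q,r) = (2,3,5) or (p,q,r) = (2,3,7). -/
/-- The vertex type of the tree `T_{p,q,r}`: a central vertex together with three chains
having `p-1`, `q-1` and `r-1` further vertices respectively (so `T_{p,q,r}` has
`p + q + r - 2` vertices when `p, q, r ≥ 1`). -/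
abbrev TVertex (p q r : ℕ) : Type := Unit ⊕ (Fin (p - 1) ⊕ (Fin (q - 1) ⊕ Fin (r - 1)))

/-- Adjacency in the tree `T_{p,q,r}`: the central vertex is adjacent to the first vertex of
each chain, and consecutive vertices of a chain are adjacent. -/
def TAdj {p q r : ℕ} : TVertex p q r → TVertex p q r → Bool
  | Sum.inl _, Sum.inr (Sum.inl i) => i.val == 0
  | Sum.inl _, Sum.inr (Sum.inr (Sum.inl i)) => i.val == 0
  | Sum.inl _, Sum.inr (Sum.inr (Sum.inr i)) => i.val == 0
  | Sum.inr (Sum.inl i), Sum.inl _ => i.val == 0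
  | Sum.inr (Sum.inr (Sum.inl i)), Sum.inl _ => i.val == 0
  | Sum.inr (Sum.inr (Sum.inr i)), Sum.inl _ => i.val == 0
  | Sum.inr (Sum.inl i), Sum.inr (Sum.inl j) => (i.val + 1 == j.val) || (j.val + 1 == i.val)
  | Sum.inr (Sum.inr (Sum.inl i)), Sum.inr (Sum.inr (Sum.inl j)) =>
      (i.val + 1 == j.val) || (j.val + 1 == i.val)
  | Sum.inr (Sum.inr (Sum.inr i)), Sum.inr (Sum.inr (Sum.inr j)) =>
      (i.val + 1 == j.val) || (j.val + 1 == i.val)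
  | _, _ => false

/-- The Gram matrix `G(p,q,r)` of the tree `T_{p,q,r}`: diagonal entries `2`, entries `-1`
between adjacent vertices, and `0` otherwise. -/
def gramT (p q r : ℕ) : Matrix (TVertex p q r) (TVertex p q r) ℤ :=
  Matrix.of fun v w => if v = w then 2 else if TAdj v w then -1 else 0

/-!
Expanding the determinant at the central vertex (Schur complement) gives
`det G = det D * (2 - c D⁻¹ cᵀ)`, where `D` is block diagonal with the Cartan matrices `A_{p-1}`,
`A_{q-1}`, `A_{r-1}` of the three arms and `c` picks the vertex of each arm next to the centre.
Since `det A_k = k + 1` and `(A_k⁻¹)₀₀ = k / (k + 1)`, this is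
`pqr (1/p + 1/q + 1/r - 1) = pq + qr + rp - pqr`.
It remains to solve `pq + qr + rp - pqr = ±1` with `1 ≤ p ≤ q ≤ r`: `p = 1` gives `q + r`,
`p = 2` gives `4 - (q - 2)(r - 2)`, and `p ≥ 3` forces `r ≤ 4`.
-/

open Matrix Finset

theorem Matrix.det_fromBlocks_replicate_of_mulVec_eq {o ι K : Type*} [Unique o] [Fintype o]
    [DecidableEq o] [Fintype ι] [DecidableEq ι] [Field K] (a : K) (b x : ι → K)
    (D : Matrix ι ι K) (hD : D.det ≠ 0) (hx : D *ᵥ x = b) :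
    (fromBlocks (of fun _ _ : o => a) (replicateRow o b) (replicateCol o b) D).det =
      D.det * (a - b ⬝ᵥ x) := by
  let := D.invertibleOfIsUnitDet hD.isUnit
  have hsol : ⅟D * replicateCol o b = replicateCol o x := by
    rw [← hx, ← replicateCol_mulVec, mulVec_mulVec, invOf_mul_self, one_mulVec]
  rw [det_fromBlocks₂₂, Matrix.mul_assoc, hsol, replicateRow_mul_replicateCol,
    det_unique (_ - _)]
  rfl

namespace CartanMatrix

theorem A_map_mulVec_apply {R : Type*} [CommRing R] (k : ℕ) (g : ℤ → R) (i : Fin k) :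
    ((A k).map (↑) *ᵥ fun j => g j) i =
      2 * g i - (if (i : ℕ) + 1 < k then g (i + 1) else 0) -
        (if 0 < (i : ℕ) then g (i - 1) else 0) := by
  simp only [mulVec, dotProduct, map_apply, A, of_apply, Fin.ext_iff]
  rw [Fin.sum_univ_eq_sum_range (fun j => ((if (i : ℕ) = j then 2
    else if (i : ℕ) + 1 = j ∨ j + 1 = i then -1 else 0 : ℤ) : R) * g j)]
  have hsplit : ∀ j ∈ range k, ((if (i : ℕ) = j then 2
      else if (i : ℕ) + 1 = j ∨ j + 1 = i then -1 else 0 : ℤ) : R) * g j =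
      (if (i : ℕ) = j then 2 * g j else 0) - (if (i : ℕ) + 1 = j then g j else 0) -
        (if 0 < (i : ℕ) then (if (i : ℕ) - 1 = j then g j else 0) else 0) := by
    intro j _
    split_ifs <;> first | omega | push_cast; ring
  have hi : (i : ℕ) < k := i.isLt
  have hi' : (i : ℕ) - 1 < k := by omega
  rw [sum_congr rfl hsplit, sum_sub_distrib, sum_sub_distrib, sum_ite_eq, sum_ite_eq,
    sum_ite_irrel, sum_ite_eq, sum_const_zero]
  simp only [mem_range, hi, hi', if_true]
  congr 1
  split_ifs with h0
  · rw [Nat.cast_pred h0]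
  · rfl

def headVec (R : Type*) [Ring R] (k : ℕ) : Fin k → R := fun i => if (i : ℕ) = 0 then -1 else 0

/-- The solution of `A k *ᵥ x = headVec k`: `x` is affine in `i`, so every row of the equation
holds once `x` is extended by `x (-1) = -1` and `x k = 0`. -/
def headSol (K : Type*) [Field K] (k : ℕ) : Fin k → K := fun i => ((i : ℤ) - k) / (k + 1)

variable {K : Type*} [Field K] [CharZero K]

theorem A_map_mulVec_headSol (k : ℕ) : (A k).map (↑) *ᵥ headSol K k = headVec K k := by
  have hk : (k : K) + 1 ≠ 0 := Nat.cast_add_one_ne_zero k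
  ext ⟨i, hi⟩
  unfold headSol headVec
  rw [A_map_mulVec_apply k (fun j : ℤ => ((j : K) - k) / (k + 1))]
  rcases (by omega : i + 1 < k ∨ k = i + 1) with hl | rfl <;> obtain rfl | h0 := eq_or_ne i 0 <;>
    simp only [*, Nat.pos_iff_ne_zero, ne_eq, not_false_eq_true, lt_self_iff_false,
      ↓reduceIte] <;> push_cast <;> field_simp <;> ring

theorem headVec_dotProduct_headSol (k : ℕ) : headVec K k ⬝ᵥ headSol K k = k / (k + 1) := by
  cases k with
  | zero => simp
  | succ k =>
    have hk : ((k + 1 : ℕ) : K) + 1 ≠ 0 := Nat.cast_add_one_ne_zero (k + 1)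
    rw [dotProduct, Fin.sum_univ_succ]
    simp only [headVec, headSol, Fin.val_zero, Fin.val_succ, if_true, Nat.succ_ne_zero,
      if_false, zero_mul, sum_const_zero, add_zero, CharP.cast_eq_zero]
    field_simp
    ring

theorem A_one_add_map_submatrix {R : Type*} [Ring R] (k : ℕ) :
    ((A (1 + k)).map (Int.cast : ℤ → R)).submatrix finSumFinEquiv finSumFinEquiv =
      fromBlocks (of fun _ _ : Fin 1 => 2) (replicateRow (Fin 1) (headVec R k))
        (replicateCol (Fin 1) (headVec R k)) ((A k).map (↑)) := by
  ext (i | i) (j | j) <;>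
    simp [A, headVec, Fin.ext_iff, Fin.fin_one_eq_zero, replicateRow, replicateCol] <;>
    split_ifs <;> first | omega | simp

theorem det_A_map (n : ℕ) : ((A n).map (Int.cast : ℤ → K)).det = n + 1 := by
  induction n with
  | zero => simp
  | succ n ih =>
    rw [add_comm n 1, ← det_submatrix_equiv_self finSumFinEquiv, A_one_add_map_submatrix,
      det_fromBlocks_replicate_of_mulVec_eq _ _ _ _ (ih ▸ Nat.cast_add_one_ne_zero n)
        (A_map_mulVec_headSol n),
      headVec_dotProduct_headSol, ih]
    field_simp
    push_cast
    ring

end CartanMatrix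

open CartanMatrix

theorem gramT_map_eq_fromBlocks (R : Type*) [Ring R] (a b c : ℕ) :
    (gramT (a + 1) (b + 1) (c + 1)).map (Int.cast : ℤ → R) =
      fromBlocks (of fun _ _ : Unit => 2)
        (replicateRow Unit (Sum.elim (headVec R a) (Sum.elim (headVec R b) (headVec R c))))
        (replicateCol Unit (Sum.elim (headVec R a) (Sum.elim (headVec R b) (headVec R c))))
        (fromBlocks ((A a).map (↑)) 0 0 (fromBlocks ((A b).map (↑)) 0 0 ((A c).map (↑)))) := by
  ext (_ | i | i | i) (_ | j | j | j) <;>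
    simp [gramT, TAdj, A, headVec, Fin.ext_iff, replicateRow, replicateCol]

theorem det_gramT_map {K : Type*} [Field K] [CharZero K] (a b c : ℕ) :
    ((gramT (a + 1) (b + 1) (c + 1)).map (Int.cast : ℤ → K)).det =
      (a + 1) * ((b + 1) * (c + 1)) * (2 - (a / (a + 1) + (b / (b + 1) + c / (c + 1)))) := by
  have hdet : (fromBlocks ((A a).map (Int.cast : ℤ → K)) 0 0
      (fromBlocks ((A b).map (↑)) 0 0 ((A c).map (↑)))).det = (a + 1) * ((b + 1) * (c + 1)) := by
    simp only [det_fromBlocks_zero₂₁, det_A_map]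
  have hsol : fromBlocks ((A a).map (Int.cast : ℤ → K)) 0 0
      (fromBlocks ((A b).map (↑)) 0 0 ((A c).map (↑))) *ᵥ
        Sum.elim (headSol K a) (Sum.elim (headSol K b) (headSol K c)) =
      Sum.elim (headVec K a) (Sum.elim (headVec K b) (headVec K c)) := by
    simp only [fromBlocks_mulVec, zero_mulVec, add_zero, zero_add, Sum.elim_comp_inl,
      Sum.elim_comp_inr, A_map_mulVec_headSol]
  rw [gramT_map_eq_fromBlocks, det_fromBlocks_replicate_of_mulVec_eq _ _ _ _
    (by simp [hdet, Nat.cast_add_one_ne_zero]) hsol, hdet]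
  simp only [sumElim_dotProduct_sumElim, headVec_dotProduct_headSol]

theorem det_gramT (p q r : ℕ) (hp : 1 ≤ p) (hq : 1 ≤ q) (hr : 1 ≤ r) :
    (gramT p q r).det = p * q + q * r + r * p - p * q * r := by
  obtain ⟨a, rfl⟩ := Nat.exists_eq_add_of_le' hp
  obtain ⟨b, rfl⟩ := Nat.exists_eq_add_of_le' hq
  obtain ⟨c, rfl⟩ := Nat.exists_eq_add_of_le' hr
  apply Int.cast_injective (α := ℚ)
  rw [Int.cast_det, det_gramT_map]
  field_simp
  push_cast
  ring

theorem unimodular_triple_iff {p q r : ℤ} (hp : 1 ≤ p) (hpq : p ≤ q) (hqr : q ≤ r) :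
    (p * q + q * r + r * p - p * q * r = 1 ∨ p * q + q * r + r * p - p * q * r = -1) ↔
      p = 2 ∧ q = 3 ∧ (r = 5 ∨ r = 7) := by
  constructor
  · intro h
    rcases (by omega : p = 1 ∨ p = 2 ∨ 3 ≤ p) with rfl | rfl | hp3
    · have : 1 * q + q * r + r * 1 - 1 * q * r = q + r := by ring
      omega
    · have hs : 2 * q + q * r + r * 2 - 2 * q * r = 4 - (q - 2) * (r - 2) := by ring
      have hle : (q - 2) * (q - 2) ≤ (q - 2) * (r - 2) :=
        mul_le_mul_of_nonneg_left (by omega) (by omega)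
      have hq4 : q ≤ 4 := by rcases h with h | h <;> nlinarith
      interval_cases q <;> omega
    · have hs : p * q + q * r + r * p - p * q * r =
          p + q + r - 1 - (p - 1) * (q - 1) * (r - 1) := by ring
      have hle : 4 * (r - 1) ≤ (p - 1) * (q - 1) * (r - 1) :=
        mul_le_mul_of_nonneg_right (by nlinarith) (by omega)
      have hr4 : r ≤ 4 := by rcases h with h | h <;> linarith
      have hq4 : q ≤ 4 := by omega
      have hp4 : p ≤ 4 := by omega
      interval_cases p <;> interval_cases q <;> interval_cases r <;> omega
  · rintro ⟨rfl, rfl, rfl | rfl⟩ <;> norm_num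

/-- for `1 ≤ p ≤ q ≤ r`, the determinant of the Gram matrix `G(p,q,r)` is `±1`
(i.e. the lattice `E_{p,q,r}` is unimodular) if and only if `(p,q,r) = (2,3,5)` or
`(p,q,r) = (2,3,7)`. -/
theorem stmt9 (p q r : ℕ) (hp : 1 ≤ p) (hpq : p ≤ q) (hqr : q ≤ r) :
    ((gramT p q r).det = 1 ∨ (gramT p q r).det = -1) ↔
      ((p, q, r) = (2, 3, 5) ∨ (p, q, r) = (2, 3, 7)) := by
  rw [det_gramT p q r hp (by omega) (by omega),
    unimodular_triple_iff (by exact_mod_cast hp) (by exact_mod_cast hpq) (by exact_mod_cast hqr)]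
  simp only [Prod.mk.injEq]
  omega
end

section
/- Let p ≤ q ≤ r be integers with p ≥ 1. The real symmetric matrix G(p,q,r) is positive semidefinite and singular (degenerate) if and only if (p,q,r) is one of (3,3,3), (2,4,4), (2,3,6); moreover, in each of these cases the kernel of G(p,q,r) is one-dimensional. -/
/-!
Write `s` for the value of `x` at the centre and read `x` along each arm outward from the
centre, padded by a zero beyond the leaf: an arm with `k - 1` vertices gives a sequence
`d₀ = s, d₁, …, dₖ = 0`. Summing by parts, `xᵀ G x = ∑_arms ∑_{n<k} (dₙ - dₙ₊₁)² - s²`, and by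
Cauchy–Schwarz each arm contributes at least `s² / k`; so `G` is positive semidefinite as soon as
`1/p + 1/q + 1/r ≥ 1`. On a kernel vector every arm sequence is linear, `dₙ = (1 - n/k) s`, so
the kernel is spanned by one explicit vector, and the equation at the centre, `2 s = ∑_arms d₁`,
holds for it exactly when `1/p + 1/q + 1/r = 1`. The triples `p ≤ q ≤ r` solving this are
`(3,3,3)`, `(2,4,4)` and `(2,3,6)`.
-/

open Matrix Finset

section Sequence

def dirichletEnergy (d : ℕ → ℝ) (k : ℕ) : ℝ := ∑ n ∈ range k, (d n - d (n + 1)) ^ 2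

lemma eq_of_secondDiff_eq_zero (d : ℕ → ℝ) (m : ℕ)
    (hrec : ∀ n < m, 2 * d (n + 1) - d n - d (n + 2) = 0) (hend : d (m + 1) = 0) :
    ∀ n ≤ m + 1, d n = (1 - n / (m + 1 : ℕ)) * d 0 := by
  have hdiff : ∀ n ≤ m, d (n + 1) - d n = d 1 - d 0 := by
    intro n
    induction n with
    | zero => simp
    | succ k ih =>
      intro hk
      linarith [ih (by omega), hrec k (by omega)]
  have hlin : ∀ n ≤ m + 1, d n = d 0 + n * (d 1 - d 0) := by
    intro n
    induction n with
    | zero => simp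
    | succ k ih =>
      intro hk
      push_cast
      linarith [ih (by omega), hdiff k (by omega)]
  intro n hn
  have hlast := hlin (m + 1) le_rfl
  rw [hend] at hlast
  push_cast at hlast
  rw [hlin n hn]
  push_cast
  field_simp
  linear_combination (-(n : ℝ)) * hlast

lemma sum_mul_secondDiff (d : ℕ → ℝ) (m : ℕ) (hend : d (m + 1) = 0) :
    ∑ n ∈ range m, d (n + 1) * (2 * d (n + 1) - d n - d (n + 2)) =
      dirichletEnergy d (m + 1) - d 0 ^ 2 + d 0 * d 1 := by
  have key : ∀ k, ∑ n ∈ range k, d (n + 1) * (2 * d (n + 1) - d n - d (n + 2)) =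
      dirichletEnergy d (k + 1) - d 0 ^ 2 + d 0 * d 1 - d (k + 1) ^ 2 + d k * d (k + 1) := by
    intro k
    induction k with
    | zero =>
      simp only [dirichletEnergy, zero_add, range_zero, sum_empty, range_one, sum_singleton]
      ring
    | succ k ih =>
      rw [sum_range_succ, ih]
      simp only [dirichletEnergy, sum_range_succ _ (k + 1)]
      ring
  rw [key, hend]
  ring

lemma inv_mul_sq_le_dirichletEnergy (d : ℕ → ℝ) {k : ℕ} (hd : d k = 0) :
    (k : ℝ)⁻¹ * d 0 ^ 2 ≤ dirichletEnergy d k := by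
  rcases k.eq_zero_or_pos with rfl | hk
  · simp [dirichletEnergy]
  rw [inv_mul_le_iff₀ (by positivity)]
  have := sq_sum_le_card_mul_sum_sq (s := range k) (f := fun n => d n - d (n + 1))
  rwa [sum_range_sub', card_range, hd, sub_zero] at this

end Sequence

section Arm

variable {m : ℕ}

def armSeq (s : ℝ) (y : Fin m → ℝ) : ℕ → ℝ
  | 0 => s
  | n + 1 => if h : n < m then y ⟨n, h⟩ else 0

variable (s : ℝ) (y : Fin m → ℝ)

@[simp] lemma armSeq_zero : armSeq s y 0 = s := rfl

@[simp] lemma armSeq_val_succ (j : Fin m) : armSeq s y (j + 1) = y j := by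
  simp [armSeq]

lemma armSeq_eq_zero {n : ℕ} (hn : m < n) : armSeq s y n = 0 := by
  cases n with
  | zero => omega
  | succ n => exact dif_neg (by omega)

lemma sum_ite_val_eq_zero_eq_neg_armSeq_one :
    (∑ j : Fin m, if (j : ℕ) = 0 then -y j else 0) = -armSeq s y 1 := by
  rcases m with _ | m <;> simp [armSeq]

lemma sum_pathRow_eq_secondDiff (i : Fin m) :
    ((if (i : ℕ) = 0 then -s else 0) + ∑ j : Fin m,
        if i = j then 2 * y j else if (i : ℕ) + 1 = j ∨ (j : ℕ) + 1 = i then -y j else 0) =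
      2 * armSeq s y (i + 1) - armSeq s y i - armSeq s y (i + 2) := by
  have hsplit : ∀ j : Fin m,
      (if i = j then 2 * y j else if (i : ℕ) + 1 = j ∨ (j : ℕ) + 1 = i then -y j else 0) =
        (if (i : ℕ) = j then 2 * armSeq s y (j + 1) else 0)
          - (if (i : ℕ) + 1 = j then armSeq s y (j + 1) else 0)
          - (if (j : ℕ) + 1 = i then armSeq s y (j + 1) else 0) := by
    intro j
    simp only [armSeq_val_succ, ← Fin.val_inj]
    split_ifs <;> first | ring1 | (exfalso; omega)
  simp only [hsplit, sum_sub_distrib]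
  rw [Fin.sum_univ_eq_sum_range (fun n => if (i : ℕ) = n then 2 * armSeq s y (n + 1) else 0),
    Fin.sum_univ_eq_sum_range (fun n => if (i : ℕ) + 1 = n then armSeq s y (n + 1) else 0),
    Fin.sum_univ_eq_sum_range (fun n => if n + 1 = (i : ℕ) then armSeq s y (n + 1) else 0),
    sum_ite_eq, sum_ite_eq, if_pos (mem_range.2 i.2)]
  have hnext : (if (i : ℕ) + 1 ∈ range m then armSeq s y (i + 1 + 1) else 0)
      = armSeq s y (i + 2) := by
    split_ifs with h
    · rfl
    · exact (armSeq_eq_zero s y (by rw [mem_range] at h; omega)).symm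
  rw [hnext]
  obtain ⟨_ | k, hk⟩ := i
  · simp only [↓reduceIte, Nat.add_eq_zero_iff, one_ne_zero, and_false, sum_const_zero,
      armSeq_zero]
    ring
  · simp only [Nat.add_right_cancel_iff, sum_ite_eq', mem_range, if_pos (show k < m by omega),
      Nat.add_eq_zero_iff, one_ne_zero, and_false, ↓reduceIte]
    ring

lemma sum_mul_armSeq_secondDiff :
    ∑ i : Fin m, y i * (2 * armSeq s y (i + 1) - armSeq s y i - armSeq s y (i + 2)) =
      dirichletEnergy (armSeq s y) (m + 1) - s ^ 2 + s * armSeq s y 1 := by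
  simp only [← armSeq_val_succ s y]
  rw [Fin.sum_univ_eq_sum_range (fun n => armSeq s y (n + 1) *
    (2 * armSeq s y (n + 1) - armSeq s y n - armSeq s y (n + 2))) m,
    sum_mul_secondDiff _ _ (armSeq_eq_zero s y (Nat.lt_succ_self m))]
  rfl

end Arm

section Gram

variable {p q r : ℕ}

abbrev realGram (p q r : ℕ) : Matrix (TVertex p q r) (TVertex p q r) ℝ :=
  (gramT p q r).map (Int.cast : ℤ → ℝ)

variable (x : TVertex p q r → ℝ)

def arm₁ : ℕ → ℝ := armSeq (x (.inl ())) (fun j => x (.inr (.inl j)))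
def arm₂ : ℕ → ℝ := armSeq (x (.inl ())) (fun j => x (.inr (.inr (.inl j))))
def arm₃ : ℕ → ℝ := armSeq (x (.inl ())) (fun j => x (.inr (.inr (.inr j))))

lemma realGram_mulVec_center :
    (realGram p q r *ᵥ x) (.inl ()) = 2 * x (.inl ()) - arm₁ x 1 - arm₂ x 1 - arm₃ x 1 := by
  simp only [mulVec, dotProduct, map_apply, gramT, TAdj, of_apply, Int.cast_ite, ite_mul,
    Fintype.sum_sum_type, univ_unique, PUnit.default_eq_unit, ↓reduceIte, sum_singleton,
    reduceCtorEq, beq_iff_eq, Int.cast_ofNat, Int.cast_neg, Int.cast_one, Int.cast_zero, neg_mul,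
    one_mul, zero_mul, arm₁, arm₂, arm₃]
  simp only [sum_ite_val_eq_zero_eq_neg_armSeq_one (x (.inl ()))]
  ring

lemma realGram_mulVec_arm₁ (i : Fin (p - 1)) :
    (realGram p q r *ᵥ x) (.inr (.inl i)) = 2 * arm₁ x (i + 1) - arm₁ x i - arm₁ x (i + 2) := by
  simp [mulVec, dotProduct, Fintype.sum_sum_type, gramT, TAdj, arm₁, sum_pathRow_eq_secondDiff]

lemma realGram_mulVec_arm₂ (i : Fin (q - 1)) :
    (realGram p q r *ᵥ x) (.inr (.inr (.inl i))) =
      2 * arm₂ x (i + 1) - arm₂ x i - arm₂ x (i + 2) := by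
  simp [mulVec, dotProduct, Fintype.sum_sum_type, gramT, TAdj, arm₂, sum_pathRow_eq_secondDiff]

lemma realGram_mulVec_arm₃ (i : Fin (r - 1)) :
    (realGram p q r *ᵥ x) (.inr (.inr (.inr i))) =
      2 * arm₃ x (i + 1) - arm₃ x i - arm₃ x (i + 2) := by
  simp [mulVec, dotProduct, Fintype.sum_sum_type, gramT, TAdj, arm₃, sum_pathRow_eq_secondDiff]

variable {x}

lemma arm₁_of_mulVec_eq_zero (hp : 1 ≤ p) (hx : realGram p q r *ᵥ x = 0) :
    ∀ n ≤ p, arm₁ x n = (1 - n / p) * x (.inl ()) := by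
  obtain ⟨m, rfl⟩ : ∃ m, p = m + 1 := ⟨p - 1, by omega⟩
  exact eq_of_secondDiff_eq_zero (arm₁ x) m
    (fun n hn => (realGram_mulVec_arm₁ x ⟨n, by omega⟩).symm.trans (congrFun hx _))
    (armSeq_eq_zero _ _ (by omega))

lemma arm₂_of_mulVec_eq_zero (hq : 1 ≤ q) (hx : realGram p q r *ᵥ x = 0) :
    ∀ n ≤ q, arm₂ x n = (1 - n / q) * x (.inl ()) := by
  obtain ⟨m, rfl⟩ : ∃ m, q = m + 1 := ⟨q - 1, by omega⟩
  exact eq_of_secondDiff_eq_zero (arm₂ x) m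
    (fun n hn => (realGram_mulVec_arm₂ x ⟨n, by omega⟩).symm.trans (congrFun hx _))
    (armSeq_eq_zero _ _ (by omega))

lemma arm₃_of_mulVec_eq_zero (hr : 1 ≤ r) (hx : realGram p q r *ᵥ x = 0) :
    ∀ n ≤ r, arm₃ x n = (1 - n / r) * x (.inl ()) := by
  obtain ⟨m, rfl⟩ : ∃ m, r = m + 1 := ⟨r - 1, by omega⟩
  exact eq_of_secondDiff_eq_zero (arm₃ x) m
    (fun n hn => (realGram_mulVec_arm₃ x ⟨n, by omega⟩).symm.trans (congrFun hx _))
    (armSeq_eq_zero _ _ (by omega))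

lemma inv_add_inv_add_inv_sub_one_mul_of_mulVec_eq_zero (hp : 1 ≤ p) (hq : 1 ≤ q) (hr : 1 ≤ r)
    (hx : realGram p q r *ᵥ x = 0) :
    ((p : ℝ)⁻¹ + (q : ℝ)⁻¹ + (r : ℝ)⁻¹ - 1) * x (.inl ()) = 0 := by
  have hcenter : 2 * x (.inl ()) - arm₁ x 1 - arm₂ x 1 - arm₃ x 1 = 0 := by
    rw [← realGram_mulVec_center, hx, Pi.zero_apply]
  have h₁ := arm₁_of_mulVec_eq_zero hp hx 1 hp
  have h₂ := arm₂_of_mulVec_eq_zero hq hx 1 hq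
  have h₃ := arm₃_of_mulVec_eq_zero hr hx 1 hr
  simp only [Nat.cast_one, one_div] at h₁ h₂ h₃
  linear_combination hcenter + h₁ + h₂ + h₃

variable (p q r) in
noncomputable def nullVec : TVertex p q r → ℝ
  | .inl _ => 1
  | .inr (.inl j) => 1 - (j + 1 : ℝ) / p
  | .inr (.inr (.inl j)) => 1 - (j + 1 : ℝ) / q
  | .inr (.inr (.inr j)) => 1 - (j + 1 : ℝ) / r

lemma nullVec_ne_zero : nullVec p q r ≠ 0 :=
  fun h => by simpa [nullVec] using congrFun h (.inl ())

lemma eq_smul_nullVec_of_mulVec_eq_zero (hp : 1 ≤ p) (hq : 1 ≤ q) (hr : 1 ≤ r)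
    (hx : realGram p q r *ᵥ x = 0) : x = x (.inl ()) • nullVec p q r := by
  funext v
  rcases v with ⟨⟩ | j | j | j
  · simp [nullVec]
  · have h := arm₁_of_mulVec_eq_zero hp hx (j + 1) (by omega)
    simp only [arm₁, armSeq_val_succ, Nat.cast_add, Nat.cast_one] at h
    simp only [nullVec, Pi.smul_apply, smul_eq_mul, h]
    ring
  · have h := arm₂_of_mulVec_eq_zero hq hx (j + 1) (by omega)
    simp only [arm₂, armSeq_val_succ, Nat.cast_add, Nat.cast_one] at h
    simp only [nullVec, Pi.smul_apply, smul_eq_mul, h]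
    ring
  · have h := arm₃_of_mulVec_eq_zero hr hx (j + 1) (by omega)
    simp only [arm₃, armSeq_val_succ, Nat.cast_add, Nat.cast_one] at h
    simp only [nullVec, Pi.smul_apply, smul_eq_mul, h]
    ring

lemma arm₁_nullVec (hp : 1 ≤ p) : ∀ n ≤ p, arm₁ (nullVec p q r) n = 1 - n / p := by
  rintro (_ | k) hk
  · simp [arm₁, nullVec]
  · by_cases hkp : k < p - 1
    · rw [arm₁, armSeq_val_succ _ _ (⟨k, hkp⟩ : Fin (p - 1))]
      simp [nullVec]
    · rw [arm₁, armSeq_eq_zero _ _ (by omega), show k + 1 = p by omega]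
      field_simp
      ring

lemma arm₂_nullVec (hq : 1 ≤ q) : ∀ n ≤ q, arm₂ (nullVec p q r) n = 1 - n / q := by
  rintro (_ | k) hk
  · simp [arm₂, nullVec]
  · by_cases hkq : k < q - 1
    · rw [arm₂, armSeq_val_succ _ _ (⟨k, hkq⟩ : Fin (q - 1))]
      simp [nullVec]
    · rw [arm₂, armSeq_eq_zero _ _ (by omega), show k + 1 = q by omega]
      field_simp
      ring

lemma arm₃_nullVec (hr : 1 ≤ r) : ∀ n ≤ r, arm₃ (nullVec p q r) n = 1 - n / r := by
  rintro (_ | k) hk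
  · simp [arm₃, nullVec]
  · by_cases hkr : k < r - 1
    · rw [arm₃, armSeq_val_succ _ _ (⟨k, hkr⟩ : Fin (r - 1))]
      simp [nullVec]
    · rw [arm₃, armSeq_eq_zero _ _ (by omega), show k + 1 = r by omega]
      field_simp
      ring

lemma realGram_mulVec_nullVec (hp : 1 ≤ p) (hq : 1 ≤ q) (hr : 1 ≤ r)
    (h : (p : ℝ)⁻¹ + (q : ℝ)⁻¹ + (r : ℝ)⁻¹ = 1) : realGram p q r *ᵥ nullVec p q r = 0 := by
  funext v
  rw [Pi.zero_apply]
  rcases v with ⟨⟩ | i | i | i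
  · rw [realGram_mulVec_center, arm₁_nullVec hp 1 hp, arm₂_nullVec hq 1 hq,
      arm₃_nullVec hr 1 hr]
    simp only [nullVec, Nat.cast_one, one_div]
    linear_combination h
  · rw [realGram_mulVec_arm₁, arm₁_nullVec hp _ (by omega), arm₁_nullVec hp _ (by omega),
      arm₁_nullVec hp _ (by omega)]
    push_cast
    ring
  · rw [realGram_mulVec_arm₂, arm₂_nullVec hq _ (by omega), arm₂_nullVec hq _ (by omega),
      arm₂_nullVec hq _ (by omega)]
    push_cast
    ring
  · rw [realGram_mulVec_arm₃, arm₃_nullVec hr _ (by omega), arm₃_nullVec hr _ (by omega),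
      arm₃_nullVec hr _ (by omega)]
    push_cast
    ring

theorem det_realGram_eq_zero_iff (hp : 1 ≤ p) (hq : 1 ≤ q) (hr : 1 ≤ r) :
    (realGram p q r).det = 0 ↔ (p : ℝ)⁻¹ + (q : ℝ)⁻¹ + (r : ℝ)⁻¹ = 1 := by
  rw [← exists_mulVec_eq_zero_iff]
  constructor
  · rintro ⟨x, hx₀, hx⟩
    have hcenter : x (.inl ()) ≠ 0 := fun h₀ => hx₀ <| by
      rw [eq_smul_nullVec_of_mulVec_eq_zero hp hq hr hx, h₀, zero_smul]
    exact sub_eq_zero.1 <| (mul_eq_zero.1 <|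
      inv_add_inv_add_inv_sub_one_mul_of_mulVec_eq_zero hp hq hr hx).resolve_right hcenter
  · exact fun h => ⟨_, nullVec_ne_zero, realGram_mulVec_nullVec hp hq hr h⟩

theorem ker_realGram_eq_span (hp : 1 ≤ p) (hq : 1 ≤ q) (hr : 1 ≤ r)
    (h : (p : ℝ)⁻¹ + (q : ℝ)⁻¹ + (r : ℝ)⁻¹ = 1) :
    LinearMap.ker (toLin' (realGram p q r)) = Submodule.span ℝ {nullVec p q r} := by
  apply le_antisymm
  · intro x hx
    rw [LinearMap.mem_ker, toLin'_apply] at hx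
    rw [eq_smul_nullVec_of_mulVec_eq_zero hp hq hr hx]
    exact Submodule.smul_mem _ _ (Submodule.mem_span_singleton_self _)
  · rw [Submodule.span_singleton_le_iff_mem, LinearMap.mem_ker, toLin'_apply]
    exact realGram_mulVec_nullVec hp hq hr h

lemma TAdj_comm (v w : TVertex p q r) : TAdj v w = TAdj w v := by
  rcases v with ⟨⟩ | v | v | v <;> rcases w with ⟨⟩ | w | w | w <;> simp [TAdj, Bool.or_comm]

lemma isHermitian_realGram : (realGram p q r).IsHermitian := by
  ext v w
  simp only [conjTranspose_apply, star_trivial, map_apply, gramT, of_apply, TAdj_comm w v,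
    eq_comm (a := w)]

lemma dotProduct_realGram_mulVec (hp : 1 ≤ p) (hq : 1 ≤ q) (hr : 1 ≤ r) :
    x ⬝ᵥ (realGram p q r *ᵥ x) = dirichletEnergy (arm₁ x) p + dirichletEnergy (arm₂ x) q +
      dirichletEnergy (arm₃ x) r - x (.inl ()) ^ 2 := by
  simp only [dotProduct, Fintype.sum_sum_type, Fintype.sum_unique, PUnit.default_eq_unit,
    realGram_mulVec_center, realGram_mulVec_arm₁, realGram_mulVec_arm₂, realGram_mulVec_arm₃,
    arm₁, arm₂, arm₃, sum_mul_armSeq_secondDiff, Nat.sub_add_cancel hp, Nat.sub_add_cancel hq,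
    Nat.sub_add_cancel hr]
  ring

theorem posSemidef_realGram (hp : 1 ≤ p) (hq : 1 ≤ q) (hr : 1 ≤ r)
    (h : 1 ≤ (p : ℝ)⁻¹ + (q : ℝ)⁻¹ + (r : ℝ)⁻¹) : (realGram p q r).PosSemidef := by
  refine .of_dotProduct_mulVec_nonneg isHermitian_realGram fun x => ?_
  rw [star_trivial, dotProduct_realGram_mulVec hp hq hr]
  have h₁ := inv_mul_sq_le_dirichletEnergy (arm₁ x) (armSeq_eq_zero _ _ (by omega : p - 1 < p))
  have h₂ := inv_mul_sq_le_dirichletEnergy (arm₂ x) (armSeq_eq_zero _ _ (by omega : q - 1 < q))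
  have h₃ := inv_mul_sq_le_dirichletEnergy (arm₃ x) (armSeq_eq_zero _ _ (by omega : r - 1 < r))
  have := mul_le_mul_of_nonneg_right h (sq_nonneg (x (.inl ())))
  simp only [arm₁, arm₂, arm₃, armSeq_zero] at h₁ h₂ h₃ ⊢
  linarith

end Gram

lemma eq_of_mul_add_mul_add_mul_eq_mul {p q r : ℕ} (hp : 1 ≤ p) (hpq : p ≤ q) (hqr : q ≤ r)
    (h : p * q + q * r + r * p = p * q * r) :
    (p, q, r) = (3, 3, 3) ∨ (p, q, r) = (2, 4, 4) ∨ (p, q, r) = (2, 3, 6) := by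
  have hp3 : p ≤ 3 := by
    by_contra! hc
    nlinarith [Nat.mul_le_mul_right (q * r) hc, Nat.mul_le_mul_left q (hpq.trans hqr),
      Nat.mul_le_mul_right r hpq, Nat.mul_pos (hp.trans hpq) (hp.trans (hpq.trans hqr))]
  interval_cases p
  · nlinarith
  · have hq4 : q ≤ 4 := by
      by_contra! hc
      nlinarith [Nat.mul_le_mul_right r hc]
    interval_cases q
    · omega
    · obtain rfl : r = 6 := by omega
      simp
    · obtain rfl : r = 4 := by omega
      simp
  · have hq3 : q ≤ 3 := by
      by_contra! hc
      nlinarith [Nat.mul_le_mul_right r hc]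
    interval_cases q
    obtain rfl : r = 3 := by omega
    simp

lemma inv_add_inv_add_inv_eq_one_iff {p q r : ℕ} (hp : 1 ≤ p) (hpq : p ≤ q) (hqr : q ≤ r) :
    (p : ℝ)⁻¹ + (q : ℝ)⁻¹ + (r : ℝ)⁻¹ = 1 ↔
      (p, q, r) = (3, 3, 3) ∨ (p, q, r) = (2, 4, 4) ∨ (p, q, r) = (2, 3, 6) := by
  refine ⟨fun h => eq_of_mul_add_mul_add_mul_eq_mul hp hpq hqr ?_, ?_⟩
  · have hq : 1 ≤ q := hp.trans hpq
    have hr : 1 ≤ r := hq.trans hqr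
    field_simp at h
    exact_mod_cast (by linear_combination h : (p * q + q * r + r * p : ℝ) = p * q * r)
  · rintro (h | h | h) <;> simp only [Prod.mk.injEq] at h <;> obtain ⟨rfl, rfl, rfl⟩ := h <;>
      norm_num

/-- for `1 ≤ p ≤ q ≤ r`, the real symmetric matrix `G(p,q,r)` is positive
semidefinite and singular if and only if `(p,q,r)` is one of `(3,3,3)`, `(2,4,4)`,
`(2,3,6)`; moreover in each of these cases the kernel of `G(p,q,r)` is one-dimensional. -/
theorem stmt11 (p q r : ℕ) (hp : 1 ≤ p) (hpq : p ≤ q) (hqr : q ≤ r) :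
    ((((gramT p q r).map (Int.cast : ℤ → ℝ)).PosSemidef ∧
        ((gramT p q r).map (Int.cast : ℤ → ℝ)).det = 0) ↔
      ((p, q, r) = (3, 3, 3) ∨ (p, q, r) = (2, 4, 4) ∨ (p, q, r) = (2, 3, 6))) ∧
    (((p, q, r) = (3, 3, 3) ∨ (p, q, r) = (2, 4, 4) ∨ (p, q, r) = (2, 3, 6)) →
      Module.finrank ℝ
        (LinearMap.ker (Matrix.toLin' ((gramT p q r).map (Int.cast : ℤ → ℝ)))) = 1) := by
  have hq : 1 ≤ q := hp.trans hpq
  have hr : 1 ≤ r := hq.trans hqr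
  rw [← inv_add_inv_add_inv_eq_one_iff hp hpq hqr]
  refine ⟨⟨fun h => (det_realGram_eq_zero_iff hp hq hr).1 h.2,
    fun h => ⟨posSemidef_realGram hp hq hr h.ge, (det_realGram_eq_zero_iff hp hq hr).2 h⟩⟩,
    fun h => ?_⟩
  rw [ker_realGram_eq_span hp hq hr h]
  exact finrank_span_singleton nullVec_ne_zero
end
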